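/- If f : ℝ^n → ℝ is convex, differentiable, and its gradient is μ-Lipschitz, then its Fenchel conjugate f* is (1/μ)-strongly convex; in particular, for any points z, y with nonempty subdifferentials of f* and any g_z ∈ ∂f*(z), g_y ∈ ∂f*(y), setting Δ = y − z, one has ⟨g_z − g_y, Δ⟩ + (1/μ)‖Δ‖₂² ≤ 0. -/

import Mathlib

/-!
By the descent lemma `f u ≤ f w + ⟨∇f w, u - w⟩ + (μ/2)‖u - w‖₂²`, testing the supremum defining
`f*(z)` at `u = w + (z - ∇f w)/μ` gives `f*(z) ≥ ⟨w, z⟩ - f w + ‖z - ∇f w‖₂²/(2μ)` for every `w`.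
Averaging this bound at `z₁, z₂` for the same `w` and using
`a‖x‖² + b‖y‖² = ‖a x + b y‖² + a b ‖x - y‖²` (for `a + b = 1`) shows that `f*` is
`(1/μ)`-strongly convex. Comparing the subgradient inequality at `z` with strong convexity along
the segment `[z, y]`, dividing by the step `t` and letting `t → 0⁺` gives
`f*(y) ≥ f*(z) + ⟨g_z, y - z⟩ + ‖y - z‖₂²/(2μ)`; adding this to the same bound with `z` and `y`
swapped proves the inequality.
-/

open Matrix Finset Real Set

noncomputable section

namespace Sketch

/-- The ℓ2 norm of a vector in `Fin k → ℝ`. -/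
def norm2 {k : ℕ} (x : Fin k → ℝ) : ℝ := Real.sqrt (∑ i, x i ^ 2)

/-- The continuous linear functional `v ↦ ⟨w, v⟩`; used to state that a function has
gradient `w` at a point. -/
def dotCLM {k : ℕ} (w : Fin k → ℝ) : (Fin k → ℝ) →L[ℝ] ℝ :=
  LinearMap.toContinuousLinearMap
    { toFun := fun v => w ⬝ᵥ v
      map_add' := fun a b => dotProduct_add w a b
      map_smul' := fun c a => by
        simp [dotProduct, Finset.mul_sum, mul_left_comm] }

/-- The domain of the Fenchel conjugate `f*`. -/
def fenchelDom {k : ℕ} (f : (Fin k → ℝ) → ℝ) : Set (Fin k → ℝ) :=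
  {z | BddAbove (Set.range fun w => w ⬝ᵥ z - f w)}

/-- The Fenchel conjugate `f*(z) = sup_w (⟨w, z⟩ - f(w))` (as a real-valued supremum,
meaningful on `fenchelDom f`). -/
def fenchel {k : ℕ} (f : (Fin k → ℝ) → ℝ) (z : Fin k → ℝ) : ℝ :=
  ⨆ w, (w ⬝ᵥ z - f w)

/-- The subdifferential of the Fenchel conjugate `f*` at `z`. -/
def fenchelSubdiff {k : ℕ} (f : (Fin k → ℝ) → ℝ) (z : Fin k → ℝ) : Set (Fin k → ℝ) :=
  {g | ∀ y ∈ fenchelDom f, fenchel f z + g ⬝ᵥ (y - z) ≤ fenchel f y}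

/-- `P` is the orthogonal projector onto the range (column space) of `S`. -/
def IsOrthProj {q m : ℕ} (S : Matrix (Fin q) (Fin m) ℝ) (P : Matrix (Fin q) (Fin q) ℝ) : Prop :=
  Pᵀ = P ∧ P * P = P ∧ P * S = S ∧ ∃ C : Matrix (Fin m) (Fin q) ℝ, P = S * C

/-- The quantity `Z_f`: the supremum of `(Δᵀ B P⊥ Bᵀ Δ)^{1/2} / ‖Δ‖₂` over nonzero
`Δ ∈ dom f* - z*`. -/
def Zf {k q : ℕ} (f : (Fin k → ℝ) → ℝ) (B : Matrix (Fin k) (Fin q) ℝ)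
    (Pperp : Matrix (Fin q) (Fin q) ℝ) (zs : Fin k → ℝ) : ℝ :=
  sSup {r | ∃ Δ : Fin k → ℝ, Δ ≠ 0 ∧ zs + Δ ∈ fenchelDom f ∧
    r = Real.sqrt (Δ ⬝ᵥ (B * Pperp * Bᵀ).mulVec Δ) / norm2 Δ}

/-- The spectral norm (largest singular value) of a matrix. -/
def specNorm {a b : ℕ} (M : Matrix (Fin a) (Fin b) ℝ) : ℝ :=
  sSup {r | ∃ v : Fin b → ℝ, norm2 v = 1 ∧ r = norm2 (M.mulVec v)}

/-- The eigenvalues of `A * Aᵀ` (i.e. the squared singular values of `A`),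
sorted in decreasing order. -/
def eigsDesc {n d : ℕ} (A : Matrix (Fin n) (Fin d) ℝ) : Fin n → ℝ := fun i =>
  ((Matrix.isHermitian_mul_conjTranspose_self A).eigenvalues ∘
    Tuple.sort (Matrix.isHermitian_mul_conjTranspose_self A).eigenvalues) i.rev

/-- The spectral tail `R_k(A) = (σ_k² + (1/k) ∑_{j=k+1}^ρ σ_j²)^{1/2}`. -/
def Rk {n d : ℕ} (A : Matrix (Fin n) (Fin d) ℝ) (k : ℕ) : ℝ :=
  Real.sqrt ((∑ j : Fin n, if (j : ℕ) + 1 = k then eigsDesc A j else 0)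
    + (1 / (k : ℝ)) * ∑ j : Fin n, if k ≤ (j : ℕ) then eigsDesc A j else 0)

/-- Product measure on `n × m` matrices with i.i.d. standard Gaussian entries. -/
def gaussMatrix (n m : ℕ) : MeasureTheory.Measure (Fin n → Fin m → ℝ) :=
  MeasureTheory.Measure.pi fun _ => MeasureTheory.Measure.pi fun _ =>
    ProbabilityTheory.gaussianReal 0 1


/-- The largest eigenvalue (Rayleigh quotient supremum) of a symmetric matrix. -/
def eigMax {q : ℕ} (M : Matrix (Fin q) (Fin q) ℝ) : ℝ :=
  sSup {r | ∃ v : Fin q → ℝ, norm2 v = 1 ∧ r = v ⬝ᵥ M.mulVec v}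

/-- The smallest eigenvalue (Rayleigh quotient infimum) of a symmetric matrix. -/
def eigMin {q : ℕ} (M : Matrix (Fin q) (Fin q) ℝ) : ℝ :=
  sInf {r | ∃ v : Fin q → ℝ, norm2 v = 1 ∧ r = v ⬝ᵥ M.mulVec v}

open Filter Topology

lemma norm2_nonneg {k : ℕ} (x : Fin k → ℝ) : 0 ≤ norm2 x :=
  Real.sqrt_nonneg _

lemma norm2_sq_eq_sum {k : ℕ} (x : Fin k → ℝ) : norm2 x ^ 2 = ∑ i, x i ^ 2 :=
  Real.sq_sqrt (Finset.sum_nonneg fun _ _ => sq_nonneg _)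

lemma norm2_sq_eq_dotProduct {k : ℕ} (x : Fin k → ℝ) : norm2 x ^ 2 = x ⬝ᵥ x := by
  rw [norm2_sq_eq_sum]
  simp only [dotProduct, sq]

lemma norm2_smul {k : ℕ} (t : ℝ) (x : Fin k → ℝ) : norm2 (t • x) = |t| * norm2 x := by
  rw [norm2, norm2, ← Real.sqrt_sq_eq_abs, ← Real.sqrt_mul (sq_nonneg t), Finset.mul_sum]
  simp only [Pi.smul_apply, smul_eq_mul, mul_pow]

lemma norm2_sub_comm {k : ℕ} (x y : Fin k → ℝ) : norm2 (x - y) = norm2 (y - x) := by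
  simp only [norm2, Pi.sub_apply, sub_sq_comm]

lemma dotProduct_le_norm2_mul_norm2 {k : ℕ} (x y : Fin k → ℝ) :
    x ⬝ᵥ y ≤ norm2 x * norm2 y := by
  rw [norm2, norm2, ← Real.sqrt_mul (Finset.sum_nonneg fun _ _ => sq_nonneg _)]
  exact Real.le_sqrt_of_sq_le (Finset.sum_mul_sq_le_sq_mul_sq _ x y)

lemma norm2_sq_convex_combination {k : ℕ} {a b : ℝ} (hab : a + b = 1) (x y : Fin k → ℝ) :
    a * norm2 x ^ 2 + b * norm2 y ^ 2 =
      norm2 (a • x + b • y) ^ 2 + a * b * norm2 (x - y) ^ 2 := by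
  obtain rfl : b = 1 - a := by linarith
  simp only [norm2_sq_eq_sum, Finset.mul_sum, ← Finset.sum_add_distrib]
  refine Finset.sum_congr rfl fun i _ => ?_
  simp only [Pi.add_apply, Pi.sub_apply, Pi.smul_apply, smul_eq_mul]
  ring

section Smooth

variable {n : ℕ} {f : (Fin n → ℝ) → ℝ} {f' : (Fin n → ℝ) → Fin n → ℝ} {μ : ℝ}

lemma hasDerivAt_comp_line (hdiff : ∀ w, HasFDerivAt f (dotCLM (f' w)) w)
    (w v : Fin n → ℝ) (t : ℝ) :
    HasDerivAt (fun t : ℝ => f (w + t • v)) (f' (w + t • v) ⬝ᵥ v) t := by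
  have hline : HasDerivAt (fun t : ℝ => w + t • v) v t := by
    simpa using ((hasDerivAt_id t).smul_const v).const_add w
  exact (hdiff (w + t • v)).comp_hasDerivAt t hline

lemma le_add_dotProduct_add_norm2_sq (hdiff : ∀ w, HasFDerivAt f (dotCLM (f' w)) w)
    (hsmooth : ∀ w v, norm2 (f' w - f' v) ≤ μ * norm2 (w - v)) (w u : Fin n → ℝ) :
    f u ≤ f w + f' w ⬝ᵥ (u - w) + μ / 2 * norm2 (u - w) ^ 2 := by
  set v := u - w
  let φ : ℝ → ℝ := fun t => f (w + t • v) - t * (f' w ⬝ᵥ v) - μ / 2 * t ^ 2 * norm2 v ^ 2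
  have hφ : ∀ t, HasDerivAt φ (f' (w + t • v) ⬝ᵥ v - f' w ⬝ᵥ v - μ * t * norm2 v ^ 2) t := by
    intro t
    have hlin : HasDerivAt (fun t : ℝ => t * (f' w ⬝ᵥ v)) (f' w ⬝ᵥ v) t := by
      simpa using (hasDerivAt_id t).mul_const (f' w ⬝ᵥ v)
    have hquad : HasDerivAt (fun t : ℝ => μ / 2 * t ^ 2 * norm2 v ^ 2) (μ * t * norm2 v ^ 2) t := by
      refine (((hasDerivAt_pow 2 t).const_mul (μ / 2)).mul_const (norm2 v ^ 2)).congr_deriv ?_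
      simp only [Nat.cast_ofNat, Nat.add_one_sub_one, pow_one]
      ring
    exact ((hasDerivAt_comp_line hdiff w v t).sub hlin).sub hquad
  have hφ_anti : AntitoneOn φ (Icc 0 1) := by
    refine antitoneOn_of_deriv_nonpos (convex_Icc 0 1)
      (fun t _ => (hφ t).continuousAt.continuousWithinAt)
      (fun t _ => (hφ t).differentiableAt.differentiableWithinAt) fun t ht => ?_
    rw [interior_Icc] at ht
    have hgrad : (f' (w + t • v) - f' w) ⬝ᵥ v ≤ μ * t * norm2 v ^ 2 :=
      calc (f' (w + t • v) - f' w) ⬝ᵥ v ≤ norm2 (f' (w + t • v) - f' w) * norm2 v :=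
            dotProduct_le_norm2_mul_norm2 _ _
        _ ≤ μ * norm2 (w + t • v - w) * norm2 v :=
            mul_le_mul_of_nonneg_right (hsmooth _ _) (norm2_nonneg v)
        _ = μ * t * norm2 v ^ 2 := by
            rw [add_sub_cancel_left, norm2_smul, abs_of_pos ht.1]
            ring
    rw [(hφ t).deriv, ← sub_dotProduct]
    linarith
  have h01 := hφ_anti (left_mem_Icc.2 zero_le_one) (right_mem_Icc.2 zero_le_one) zero_le_one
  simp only [φ, v, zero_smul, add_zero, one_smul, zero_mul, sub_zero, one_mul, add_sub_cancel,
    ne_eq, OfNat.ofNat_ne_zero, not_false_eq_true, zero_pow, mul_zero, one_pow, mul_one] at h01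
  linarith

end Smooth

lemma add_le_of_forall_Ioc_mul_le {a b d : ℝ}
    (h : ∀ t ∈ Ioc (0 : ℝ) 1, t * a ≤ t * b - t * (1 - t) * d) : a + d ≤ b := by
  have hlim : Tendsto (fun t : ℝ => b - (1 - t) * d) (𝓝[>] 0) (𝓝 (b - d)) := by
    have : Tendsto (fun t : ℝ => b - (1 - t) * d) (𝓝 0) (𝓝 (b - (1 - 0) * d)) :=
      (by fun_prop : Continuous fun t : ℝ => b - (1 - t) * d).tendsto 0
    simpa using this.mono_left nhdsWithin_le_nhds
  have hev : ∀ᶠ t in 𝓝[>] (0 : ℝ), a ≤ b - (1 - t) * d := by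
    filter_upwards [Ioo_mem_nhdsGT one_pos] with t ht
    refine le_of_mul_le_mul_left ?_ ht.1
    linarith [h t ⟨ht.1, ht.2.le⟩]
  linarith [ge_of_tendsto hlim hev]

section Fenchel

variable {n : ℕ} {f : (Fin n → ℝ) → ℝ} {f' : (Fin n → ℝ) → Fin n → ℝ} {μ : ℝ}
  {z z₁ z₂ : Fin n → ℝ}

lemma le_fenchel (hz : z ∈ fenchelDom f) (w : Fin n → ℝ) : w ⬝ᵥ z - f w ≤ fenchel f z :=
  le_ciSup hz w

lemma convex_fenchelDom : Convex ℝ (fenchelDom f) := by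
  intro z₁ h₁ z₂ h₂ a b ha hb hab
  refine ⟨a * fenchel f z₁ + b * fenchel f z₂, ?_⟩
  rintro _ ⟨w, rfl⟩
  calc w ⬝ᵥ (a • z₁ + b • z₂) - f w = a * (w ⬝ᵥ z₁ - f w) + b * (w ⬝ᵥ z₂ - f w) := by
        simp only [dotProduct_add, dotProduct_smul, smul_eq_mul]
        linear_combination f w * hab
    _ ≤ a * fenchel f z₁ + b * fenchel f z₂ := by
        gcongr
        exacts [le_fenchel h₁ w, le_fenchel h₂ w]

lemma add_norm2_sq_le_fenchel (hμ : 0 < μ) (hdiff : ∀ w, HasFDerivAt f (dotCLM (f' w)) w)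
    (hsmooth : ∀ w v, norm2 (f' w - f' v) ≤ μ * norm2 (w - v)) (hz : z ∈ fenchelDom f)
    (w : Fin n → ℝ) : w ⬝ᵥ z - f w + 1 / (2 * μ) * norm2 (z - f' w) ^ 2 ≤ fenchel f z := by
  set d := z - f' w
  set u := w + μ⁻¹ • d
  have hdescent := le_add_dotProduct_add_norm2_sq hdiff hsmooth w u
  rw [add_sub_cancel_left, norm2_smul, abs_of_pos (inv_pos.2 hμ), dotProduct_smul,
    smul_eq_mul] at hdescent
  have hd : d ⬝ᵥ z - f' w ⬝ᵥ d = norm2 d ^ 2 := by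
    rw [norm2_sq_eq_dotProduct, dotProduct_comm (f' w), ← dotProduct_sub]
  have hu : u ⬝ᵥ z = w ⬝ᵥ z + μ⁻¹ * (d ⬝ᵥ z) := by
    rw [add_dotProduct, smul_dotProduct, smul_eq_mul]
  have hμd : μ / 2 * (μ⁻¹ * norm2 d) ^ 2 = μ⁻¹ * norm2 d ^ 2 - 1 / (2 * μ) * norm2 d ^ 2 := by
    field_simp
    ring
  calc w ⬝ᵥ z - f w + 1 / (2 * μ) * norm2 d ^ 2 ≤ u ⬝ᵥ z - f u := by
        linear_combination hdescent - μ⁻¹ * hd + hμd - hu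
    _ ≤ fenchel f z := le_fenchel hz u

lemma fenchel_convex_combination_le (hμ : 0 < μ)
    (hdiff : ∀ w, HasFDerivAt f (dotCLM (f' w)) w)
    (hsmooth : ∀ w v, norm2 (f' w - f' v) ≤ μ * norm2 (w - v))
    (h₁ : z₁ ∈ fenchelDom f) (h₂ : z₂ ∈ fenchelDom f) {a b : ℝ} (ha : 0 ≤ a) (hb : 0 ≤ b)
    (hab : a + b = 1) :
    fenchel f (a • z₁ + b • z₂) ≤
      a * fenchel f z₁ + b * fenchel f z₂ - a * b / (2 * μ) * norm2 (z₁ - z₂) ^ 2 := by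
  refine ciSup_le fun w => ?_
  have h₁w := mul_le_mul_of_nonneg_left (add_norm2_sq_le_fenchel hμ hdiff hsmooth h₁ w) ha
  have h₂w := mul_le_mul_of_nonneg_left (add_norm2_sq_le_fenchel hμ hdiff hsmooth h₂ w) hb
  have hsq := norm2_sq_convex_combination hab (z₁ - f' w) (z₂ - f' w)
  rw [sub_sub_sub_cancel_right] at hsq
  have hnonneg : 0 ≤ 1 / (2 * μ) * norm2 (a • (z₁ - f' w) + b • (z₂ - f' w)) ^ 2 := by
    positivity
  simp only [dotProduct_add, dotProduct_smul, smul_eq_mul]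
  linear_combination h₁w + h₂w + hnonneg - 1 / (2 * μ) * hsq + f w * hab

lemma fenchel_add_dotProduct_add_le (hμ : 0 < μ)
    (hdiff : ∀ w, HasFDerivAt f (dotCLM (f' w)) w)
    (hsmooth : ∀ w v, norm2 (f' w - f' v) ≤ μ * norm2 (w - v))
    {y g : Fin n → ℝ} (hz : z ∈ fenchelDom f) (hy : y ∈ fenchelDom f)
    (hg : g ∈ fenchelSubdiff f z) :
    fenchel f z + g ⬝ᵥ (y - z) + 1 / (2 * μ) * norm2 (y - z) ^ 2 ≤ fenchel f y := by
  suffices g ⬝ᵥ (y - z) + 1 / (2 * μ) * norm2 (y - z) ^ 2 ≤ fenchel f y - fenchel f z by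
    linarith
  refine add_le_of_forall_Ioc_mul_le fun t ⟨ht₀, ht₁⟩ => ?_
  have hcomb := fenchel_convex_combination_le hμ hdiff hsmooth hy hz ht₀.le
    (sub_nonneg.2 ht₁) (add_sub_cancel t 1)
  have hsub := hg _ (convex_fenchelDom hy hz ht₀.le (sub_nonneg.2 ht₁) (add_sub_cancel t 1))
  rw [show t • y + (1 - t) • z - z = t • (y - z) by module, dotProduct_smul, smul_eq_mul] at hsub
  linear_combination hsub + hcomb

end Fenchel

theorem statement_5_general {n : ℕ} (f : (Fin n → ℝ) → ℝ) (f' : (Fin n → ℝ) → Fin n → ℝ)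
    (μ : ℝ) (hμ : 0 < μ)
    (hdiff : ∀ w, HasFDerivAt f (dotCLM (f' w)) w)
    (hsmooth : ∀ w v, norm2 (f' w - f' v) ≤ μ * norm2 (w - v)) :
    ConvexOn ℝ (fenchelDom f) (fun z => fenchel f z - 1 / (2 * μ) * norm2 z ^ 2) ∧
    ∀ z y : Fin n → ℝ, z ∈ fenchelDom f → y ∈ fenchelDom f →
      ∀ gz ∈ fenchelSubdiff f z, ∀ gy ∈ fenchelSubdiff f y,
        (gz - gy) ⬝ᵥ (y - z) + 1 / μ * norm2 (y - z) ^ 2 ≤ 0 := by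
  refine ⟨⟨convex_fenchelDom, fun z₁ h₁ z₂ h₂ a b ha hb hab => ?_⟩,
    fun z y hz hy gz hgz gy hgy => ?_⟩
  · have hcomb := fenchel_convex_combination_le hμ hdiff hsmooth h₁ h₂ ha hb hab
    have hsq := norm2_sq_convex_combination hab z₁ z₂
    simp only [smul_eq_mul]
    linear_combination hcomb + 1 / (2 * μ) * hsq
  · have hzy := fenchel_add_dotProduct_add_le hμ hdiff hsmooth hz hy hgz
    have hyz := fenchel_add_dotProduct_add_le hμ hdiff hsmooth hy hz hgy
    rw [norm2_sub_comm z y, ← neg_sub y z, dotProduct_neg] at hyz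
    rw [sub_dotProduct]
    linear_combination hzy + hyz

/-- if `f` is convex, differentiable with `μ`-Lipschitz gradient, then
its Fenchel conjugate is `(1/μ)`-strongly convex (i.e. `f* - (1/(2μ))‖·‖₂²` is convex on
`dom f*`), and for points `z, y ∈ dom f*` with subgradients `gz ∈ ∂f*(z)`, `gy ∈ ∂f*(y)`
and `Δ = y - z`, one has `⟨gz - gy, Δ⟩ + (1/μ)‖Δ‖₂² ≤ 0`. -/
theorem statement_5 {n : ℕ} (f : (Fin n → ℝ) → ℝ) (f' : (Fin n → ℝ) → Fin n → ℝ)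
    (μ : ℝ) (hμ : 0 < μ)
    (hconv : ConvexOn ℝ Set.univ f)
    (hdiff : ∀ w, HasFDerivAt f (dotCLM (f' w)) w)
    (hsmooth : ∀ w v, norm2 (f' w - f' v) ≤ μ * norm2 (w - v)) :
    ConvexOn ℝ (fenchelDom f) (fun z => fenchel f z - 1 / (2 * μ) * norm2 z ^ 2) ∧
    ∀ z y : Fin n → ℝ, z ∈ fenchelDom f → y ∈ fenchelDom f →
      ∀ gz ∈ fenchelSubdiff f z, ∀ gy ∈ fenchelSubdiff f y,
        (gz - gy) ⬝ᵥ (y - z) + 1 / μ * norm2 (y - z) ^ 2 ≤ 0 :=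
  statement_5_general f f' μ hμ hdiff hsmooth

end Sketch
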